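/- For every continuous 2π-periodic function f : ℝ → ℂ, the Cesàro means of its Fourier partial sums, (1/N) Σ_{n=0}^{N-1} S_n(f), converge to f uniformly as N → ∞, where S_n(f)(t) = Σ_{k=-n}^{n} \hat f(k) e^{ikt} and \hat f(k) = (1/2π)∫_{-π}^{π} f(t) e^{-ikt} dt. -/

import Mathlib

/-!
The Cesàro mean `σ_N f` is the convolution of `f` with the Fejér kernel
`F_N(u) = |∑_{j<N} e^{iju}|² / N`, which is nonnegative with mean `1`; hence `σ_N` does not
increase the sup norm. On an exponential, `σ_N e_m = (1 - |m|/N)₊ e_m → e_m` uniformly. The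
continuous functions `g` with `σ_N g → g` uniformly therefore form a subspace that contains the
trigonometric polynomials and is closed under uniform limits, and trigonometric polynomials are
uniformly dense among continuous `2π`-periodic functions.
-/

open scoped Real

open Complex Finset Filter intervalIntegral

noncomputable section

def fourierCoeffPi (f : ℝ → ℂ) (k : ℤ) : ℂ :=
  (1 / (2 * (π : ℂ))) * ∫ s in (-π : ℝ)..π, f s * exp (-(I * k * s))

def fejerMean (f : ℝ → ℂ) (N : ℕ) (t : ℝ) : ℂ :=
  (1 / (N : ℂ)) * ∑ n ∈ range N, ∑ k ∈ Icc (-(n : ℤ)) n, fourierCoeffPi f k * exp (I * k * t)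

-- Defined by its closed form, so that it is visibly real and nonnegative; `ofReal_fejerKernel`
-- identifies it with the average of the Dirichlet kernels `D_n`, `n < N`.
def fejerKernel (N : ℕ) (u : ℝ) : ℝ :=
  normSq (∑ j ∈ range N, exp (I * j * u)) / N

end

theorem integral_exp_I_mul_int_mul (m : ℤ) :
    ∫ s in (-π : ℝ)..π, exp (I * m * s) = if m = 0 then 2 * (π : ℂ) else 0 := by
  split_ifs with hm
  · simp [hm]; ring
  · have hc : I * m ≠ 0 := by simp [hm]
    have hper : exp (I * m * π) = exp (I * m * ↑(-π)) := by
      rw [exp_eq_exp_iff_exists_int]; exact ⟨m, by push_cast; ring⟩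
    rw [integral_exp_mul_complex hc, hper, sub_self, zero_div]

theorem fourierCoeffPi_exp (m k : ℤ) :
    fourierCoeffPi (fun s => exp (I * m * s)) k = if m = k then 1 else 0 := by
  have hmul (s : ℝ) : exp (I * m * s) * exp (-(I * k * s)) = exp (I * ((m - k : ℤ) : ℂ) * s) := by
    rw [← exp_add]; push_cast; ring_nf
  simp only [fourierCoeffPi, hmul, integral_exp_I_mul_int_mul, sub_eq_zero]
  split_ifs
  · field_simp
  · rw [mul_zero]

theorem fourierCoeffPi_add {g h : ℝ → ℂ} (hg : Continuous g) (hh : Continuous h) (k : ℤ) :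
    fourierCoeffPi (g + h) k = fourierCoeffPi g k + fourierCoeffPi h k := by
  have hint {φ : ℝ → ℂ} (hφ : Continuous φ) :
      IntervalIntegrable (fun s : ℝ => φ s * exp (-(I * k * s))) MeasureTheory.volume (-π) π :=
    (hφ.mul (by fun_prop)).intervalIntegrable _ _
  simp only [fourierCoeffPi, Pi.add_apply, add_mul]
  rw [integral_add (hint hg) (hint hh), mul_add]

theorem fourierCoeffPi_smul (c : ℂ) (g : ℝ → ℂ) (k : ℤ) :
    fourierCoeffPi (c • g) k = c * fourierCoeffPi g k := by
  simp only [fourierCoeffPi, Pi.smul_apply, smul_eq_mul, mul_assoc, integral_const_mul]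
  ring

theorem fejerMean_exp (m : ℤ) (N : ℕ) (t : ℝ) :
    fejerMean (fun s => exp (I * m * s)) N t = ((N - m.natAbs : ℕ) / N : ℂ) * exp (I * m * t) := by
  have hmem (n : ℕ) : m ∈ Icc (-(n : ℤ)) n ↔ m.natAbs ≤ n := by rw [mem_Icc]; omega
  have hcard : ((range N).filter (m.natAbs ≤ ·)).card = N - m.natAbs := by
    rw [range_eq_Ico, Ico_filter_le, Nat.card_Ico]; omega
  simp only [fejerMean, fourierCoeffPi_exp, sum_boole_mul, hmem]
  rw [← sum_filter, sum_const, hcard, nsmul_eq_mul]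
  ring

theorem fejerMean_add {g h : ℝ → ℂ} (hg : Continuous g) (hh : Continuous h) (N : ℕ) (t : ℝ) :
    fejerMean (g + h) N t = fejerMean g N t + fejerMean h N t := by
  simp only [fejerMean, fourierCoeffPi_add hg hh, add_mul, sum_add_distrib, mul_add]

theorem fejerMean_smul (c : ℂ) (g : ℝ → ℂ) (N : ℕ) (t : ℝ) :
    fejerMean (c • g) N t = c * fejerMean g N t := by
  simp only [fejerMean, fourierCoeffPi_smul, mul_assoc, ← mul_sum]
  ring

theorem norm_one_sub_natCast_sub_div_le (a N : ℕ) (hN : N ≠ 0) :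
    ‖1 - ((N - a : ℕ) / N : ℂ)‖ ≤ a / N := by
  have hN' : (0 : ℝ) < N := by positivity
  have h1 : ((N - a : ℕ) : ℝ) ≤ N := by exact_mod_cast Nat.sub_le N a
  have h2 : (N : ℝ) - a ≤ ((N - a : ℕ) : ℝ) := by
    rw [sub_le_iff_le_add]; exact_mod_cast (by omega : N ≤ N - a + a)
  rw [show ((N - a : ℕ) / N : ℂ) = (((N - a : ℕ) : ℝ) / N : ℝ) by push_cast; ring,
    ← ofReal_one, ← ofReal_sub, norm_real, Real.norm_eq_abs, one_sub_div hN'.ne', abs_div,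
    abs_of_nonneg (sub_nonneg.2 h1), abs_of_pos hN']
  gcongr
  linarith

theorem tendstoUniformly_fejerMean_exp (m : ℤ) :
    TendstoUniformly (fejerMean fun s => exp (I * m * s)) (fun s => exp (I * m * s)) atTop := by
  rw [Metric.tendstoUniformly_iff]
  intro ε hε
  filter_upwards [eventually_ne_atTop 0,
    (tendsto_const_div_atTop_nhds_zero_nat (m.natAbs : ℝ)).eventually (gt_mem_nhds hε)]
    with N hN hlt t
  calc dist (exp (I * m * t)) (fejerMean (fun s => exp (I * m * s)) N t)
      = ‖1 - ((N - m.natAbs : ℕ) / N : ℂ)‖ := by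
        rw [fejerMean_exp, dist_eq_norm, ← one_sub_mul, norm_mul]; simp [norm_exp]
    _ < ε := (norm_one_sub_natCast_sub_div_le _ _ hN).trans_lt hlt

-- `(j, l) ↦ (max j l, j - l)` is a bijection onto `{(n, k) | n < N, |k| ≤ n}`.
theorem sum_range_sum_Icc_eq_sum_product {M : Type*} [AddCommMonoid M] (N : ℕ) (φ : ℤ → M) :
    ∑ n ∈ range N, ∑ k ∈ Icc (-(n : ℤ)) n, φ k = ∑ p ∈ range N ×ˢ range N, φ (p.1 - p.2) := by
  rw [sum_sigma']
  refine sum_nbij' (fun x => ((x.1 + min x.2 0 : ℤ).toNat, (x.1 - max x.2 0 : ℤ).toNat))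
    (fun p => ⟨max p.1 p.2, (p.1 : ℤ) - p.2⟩) ?_ ?_ ?_ ?_ ?_ <;>
    simp only [mem_sigma, mem_product, mem_range, mem_Icc, Sigma.forall, Prod.forall,
      Prod.mk.injEq, Sigma.mk.inj_iff, heq_eq_eq]
  all_goals intros
  all_goals first | omega | congr 1; omega

theorem ofReal_fejerKernel (N : ℕ) (u : ℝ) :
    (fejerKernel N u : ℂ) = 1 / N * ∑ n ∈ range N, ∑ k ∈ Icc (-(n : ℤ)) n, exp (I * k * u) := by
  have hexp (j l : ℕ) :
      exp (I * ((j - l : ℤ) : ℂ) * u) = exp (I * j * u) * (starRingEnd ℂ) (exp (I * l * u)) := by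
    rw [← exp_conj, ← exp_add]
    simp only [map_mul, conj_I, conj_natCast, conj_ofReal]
    push_cast
    ring_nf
  rw [sum_range_sum_Icc_eq_sum_product N (fun k : ℤ => exp (I * k * u)), sum_product]
  simp only [hexp, ← mul_sum, ← sum_mul, ← map_sum, mul_conj, fejerKernel]
  push_cast
  ring

theorem fejerKernel_nonneg (N : ℕ) (u : ℝ) : 0 ≤ fejerKernel N u :=
  div_nonneg (normSq_nonneg _) N.cast_nonneg

theorem continuous_fejerKernel (N : ℕ) : Continuous (fejerKernel N) := by
  unfold fejerKernel; fun_prop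

theorem fejerMean_eq_integral {g : ℝ → ℂ} (hg : Continuous g) (N : ℕ) (t : ℝ) :
    fejerMean g N t = 1 / (2 * π) * ∫ s in (-π : ℝ)..π, g s * fejerKernel N (t - s) := by
  have hcont (k : ℤ) : Continuous fun s : ℝ => g s * exp (I * k * ↑(t - s)) := hg.mul (by fun_prop)
  have hterm (k : ℤ) : fourierCoeffPi g k * exp (I * k * t) =
      1 / (2 * π) * ∫ s in (-π : ℝ)..π, g s * exp (I * k * ↑(t - s)) := by
    rw [fourierCoeffPi, mul_assoc, ← integral_mul_const]
    congr 2; funext s; rw [mul_assoc, ← exp_add]; push_cast; ring_nf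
  simp_rw [ofReal_fejerKernel, mul_left_comm (g _), integral_const_mul, mul_sum]
  rw [integral_finsetSum fun n _ =>
    (continuous_finsetSum _ fun k _ => hcont k).intervalIntegrable _ _]
  simp_rw [integral_finsetSum fun k _ => (hcont k).intervalIntegrable _ _]
  simp only [fejerMean, hterm, mul_sum]
  ring_nf

theorem integral_fejerKernel {N : ℕ} (hN : N ≠ 0) (t : ℝ) :
    ∫ s in (-π : ℝ)..π, fejerKernel N (t - s) = 2 * π := by
  -- the Fejér mean of the constant `e_0 = 1` is `1`
  have h := fejerMean_eq_integral (g := fun s => exp (I * (0 : ℤ) * s)) (by fun_prop) N t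
  rw [fejerMean_exp] at h
  simp only [Int.cast_zero, mul_zero, zero_mul, exp_zero, one_mul, mul_one, Int.natAbs_zero,
    Nat.sub_zero, intervalIntegral.integral_ofReal] at h
  have hpi : (π : ℂ) ≠ 0 := ofReal_ne_zero.2 Real.pi_ne_zero
  field_simp at h
  exact_mod_cast h.symm

theorem norm_fejerMean_le {g : ℝ → ℂ} (hg : Continuous g) {C : ℝ} (hC : ∀ s, ‖g s‖ ≤ C)
    (N : ℕ) (t : ℝ) : ‖fejerMean g N t‖ ≤ C := by
  rcases eq_or_ne N 0 with rfl | hN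
  · simpa [fejerMean] using (norm_nonneg _).trans (hC 0)
  have hbound : ‖∫ s in (-π : ℝ)..π, g s * fejerKernel N (t - s)‖ ≤
      ∫ s in (-π : ℝ)..π, C * fejerKernel N (t - s) := by
    refine norm_integral_le_of_norm_le (by linarith [Real.pi_pos]) (.of_forall fun s _ => ?_)
      ((continuous_const.mul ((continuous_fejerKernel N).comp (by fun_prop))).intervalIntegrable
        _ _)
    rw [norm_mul, norm_real, Real.norm_of_nonneg (fejerKernel_nonneg _ _)]
    exact mul_le_mul_of_nonneg_right (hC s) (fejerKernel_nonneg _ _)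
  rw [integral_const_mul, integral_fejerKernel hN] at hbound
  have hpi : ‖1 / (2 * (π : ℂ))‖ = 1 / (2 * π) := by
    rw [← ofReal_ofNat, ← ofReal_mul, ← ofReal_one, ← ofReal_div, norm_real,
      Real.norm_of_nonneg (by positivity)]
  rw [fejerMean_eq_integral hg, norm_mul, hpi]
  calc 1 / (2 * π) * ‖∫ s in (-π : ℝ)..π, g s * fejerKernel N (t - s)‖
      ≤ 1 / (2 * π) * (C * (2 * π)) := by gcongr
    _ = C := by field_simp

def fejerSummable : Submodule ℂ (ℝ → ℂ) where
  carrier := {g | Continuous g ∧ TendstoUniformly (fejerMean g) g atTop}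
  add_mem' := by
    rintro g h ⟨hg, hg_lim⟩ ⟨hh, hh_lim⟩
    refine ⟨hg.add hh, ?_⟩
    rw [show fejerMean (g + h) = fejerMean g + fejerMean h from
      funext₂ fun N t => fejerMean_add hg hh N t]
    exact hg_lim.add hh_lim
  zero_mem' := by
    refine ⟨continuous_const, ?_⟩
    rw [show fejerMean 0 = 0 from funext₂ fun N t => by simpa using fejerMean_smul 0 0 N t]
    exact fun u hu => .of_forall fun _ _ => refl_mem_uniformity hu
  smul_mem' := by
    rintro c g ⟨hg, hg_lim⟩
    refine ⟨hg.const_smul c, ?_⟩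
    rw [show fejerMean (c • g) = fun N => c • fejerMean g N from
      funext₂ fun N t => fejerMean_smul c g N t]
    exact (uniformContinuous_const_smul c).comp_tendstoUniformly hg_lim

theorem mem_fejerSummable_of_forall_approx {g : ℝ → ℂ} (hg : Continuous g)
    (happrox : ∀ ε > 0, ∃ P ∈ fejerSummable, ∀ t, ‖g t - P t‖ < ε) : g ∈ fejerSummable := by
  refine ⟨hg, Metric.tendstoUniformly_iff.2 fun ε hε => ?_⟩
  obtain ⟨P, ⟨hP, hP_lim⟩, hgP⟩ := happrox (ε / 3) (by positivity)
  filter_upwards [Metric.tendstoUniformly_iff.1 hP_lim (ε / 3) (by positivity)] with N hN t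
  have hmean : ‖fejerMean P N t - fejerMean g N t‖ ≤ ε / 3 := by
    have hsplit := fejerMean_add (hg.sub hP) hP N t
    rw [sub_add_cancel] at hsplit
    rw [hsplit, norm_sub_rev, add_sub_cancel_right]
    exact norm_fejerMean_le (hg.sub hP) (fun s => (hgP s).le) N t
  calc dist (g t) (fejerMean g N t)
      ≤ dist (g t) (P t) + dist (P t) (fejerMean P N t)
          + dist (fejerMean P N t) (fejerMean g N t) := dist_triangle4 _ _ _ _
    _ < ε / 3 + ε / 3 + ε / 3 := by
        rw [dist_eq_norm (g t), dist_eq_norm (fejerMean P N t)]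
        exact add_lt_add_of_lt_of_le (add_lt_add (hgP t) (hN t)) hmean
    _ = ε := by ring

theorem fourier_coe_eq_exp (m : ℤ) (s : ℝ) :
    fourier m (s : AddCircle (2 * π)) = exp (I * m * s) := by
  have hpi : (π : ℂ) ≠ 0 := ofReal_ne_zero.2 Real.pi_ne_zero
  rw [fourier_coe_apply]
  congr 1
  field_simp
  push_cast
  ring

theorem mem_fejerSummable_of_mem_span {Q : C(AddCircle (2 * π), ℂ)}
    (hQ : Q ∈ Submodule.span ℂ (Set.range fourier)) : (fun s : ℝ => Q s) ∈ fejerSummable := by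
  induction hQ using Submodule.span_induction with
  | mem _ hmem =>
    obtain ⟨m, rfl⟩ := hmem
    simp only [fourier_coe_eq_exp]
    exact ⟨by fun_prop, tendstoUniformly_fejerMean_exp m⟩
  | zero => exact zero_mem _
  | add _ _ _ _ hP hP' => exact add_mem hP hP'
  | smul c _ _ hP => exact Submodule.smul_mem _ c hP

theorem exists_mem_fejerSummable_near {f : ℝ → ℂ} (hf : Continuous f)
    (hper : ∀ t : ℝ, f (t + 2 * π) = f t) {ε : ℝ} (hε : 0 < ε) :
    ∃ P ∈ fejerSummable, ∀ t, ‖f t - P t‖ < ε := by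
  have : Fact (0 < 2 * π) := ⟨by positivity⟩
  let F : C(AddCircle (2 * π), ℂ) := ⟨Function.Periodic.lift hper, hf.quotient_liftOn' _⟩
  have hF : F ∈ (Submodule.span ℂ (Set.range fourier)).topologicalClosure := by
    rw [span_fourier_closure_eq_top]; trivial
  obtain ⟨Q, hQ, hFQ⟩ := Metric.mem_closure_iff.1 hF ε hε
  exact ⟨fun s => Q s, mem_fejerSummable_of_mem_span hQ,
    fun t => by
      rw [← dist_eq_norm]
      exact (ContinuousMap.dist_apply_le_dist (t : AddCircle (2 * π))).trans_lt hFQ⟩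

/-- Fejér's theorem: for a continuous `2π`-periodic function `f : ℝ → ℂ`, the Cesàro means
`(1/N) ∑_{n=0}^{N-1} S_n(f)` of the Fourier partial sums
`S_n(f)(t) = ∑_{k=-n}^{n} f̂(k) e^{ikt}`, with
`f̂(k) = (1/2π) ∫_{-π}^{π} f(s) e^{-iks} ds`, converge to `f` uniformly as `N → ∞`. -/
theorem fejer_cesaro_uniform_convergence (f : ℝ → ℂ) (hf : Continuous f)
    (hper : ∀ t : ℝ, f (t + 2 * π) = f t) :
    TendstoUniformly
      (fun (N : ℕ) (t : ℝ) => (1 / (N : ℂ)) *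
        ∑ n ∈ Finset.range N, ∑ k ∈ Finset.Icc (-(n : ℤ)) (n : ℤ),
          ((1 / (2 * (π : ℂ))) *
              ∫ s in (-π : ℝ)..π, f s * Complex.exp (-(Complex.I * (k : ℂ) * (s : ℂ)))) *
            Complex.exp (Complex.I * (k : ℂ) * (t : ℂ)))
      f Filter.atTop := by
  change TendstoUniformly (fejerMean f) f atTop
  exact (mem_fejerSummable_of_forall_approx hf fun _ hε =>
    exists_mem_fejerSummable_near hf hper hε).2
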